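/- Let X and Y be compact pathwise connected metric spaces, let E be a smooth reflexive Banach space which is 2-iso-reflexive, and let Δ : Lip(X,E) → Lip(Y,E) be a 2-local isometry. Suppose y_1, y_2 ∈ Y and x_1, x_2 ∈ X are such that for each j = 1, 2 there exist norm-one functionals u_j*, v_j* ∈ S_{E*} with v_j*(Δ(f)(y_j)) = u_j*(f(x_j)) for every f ∈ Lip(X,E). Then d(x_1, x_2) ≤ max{1, diam(X)} · d(y_1, y_2). -/

import Mathlib

/-!
Choose `e_j` with `u_j e_j = 1` (reflexivity) and let `T` be a surjective linear isometry that
agrees with `Δ` on the tents `P_j` of height `e_j` at `x_j`. The functional `W f = v_j (T f y_j)`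
has norm at most `1` and `W P_j = 1`; for `g ∈ ker W` this gives `1 ≤ ‖e_j + t g(x_j)‖` for small
`t > 0`, so the unique support functional `u_j` of `e_j` (smoothness) has `0 ≤ re u_j (g x_j)`,
whence `W = u_j ∘ δ_{x_j}`.

If `d(y₁, y₂) < 1`, then `f ↦ v₂ (T f y₁)` is within `d(y₁, y₂)` of `u₂ ∘ δ_{x₂}`, so it does not
vanish on constants. Pulling a peak function on `Y` back through `T⁻¹` shows that such a functional
is `b ∘ δ_x` for a single point `x`; since `f ↦ v₁ (T f y₁)` is localized at `x₁` and a suitable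
combination of the two functionals localizes as well, `x = x₁`. A tent at `x₁` of radius
`min (d(x₁, x₂)) 1` then gives `d(x₁, x₂) ≤ d(y₁, y₂)`. If `d(y₁, y₂) ≥ 1`, the bound
`d(x₁, x₂) ≤ diam X` suffices.
-/

open Function Metric Set
open scoped NNReal

/-- A function between a metric space and a normed space is bounded and Lipschitz. -/
def IsBddLip {X E : Type*} [MetricSpace X] [NormedAddCommGroup E] (f : X → E) : Prop :=
  (∃ K : ℝ, ∀ x y : X, ‖f x - f y‖ ≤ K * dist x y) ∧ ∃ C : ℝ, ∀ x : X, ‖f x‖ ≤ C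

/-- The Lipschitz constant `L(f)` of a function. -/
noncomputable def lipConst {X E : Type*} [MetricSpace X] [NormedAddCommGroup E] (f : X → E) : ℝ :=
  sInf {K : ℝ | 0 ≤ K ∧ ∀ x y : X, ‖f x - f y‖ ≤ K * dist x y}

/-- The norm `max {L(f), ‖f‖∞}` of the space `Lip(X,E)`. -/
noncomputable def lipNorm {X E : Type*} [MetricSpace X] [NormedAddCommGroup E] (f : X → E) : ℝ :=
  max (lipConst f) (⨆ x : X, ‖f x‖)

/-- `T` is a surjective linear isometry from `Lip(X,E)` onto `Lip(Y,F)` (encoded on plain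
functions, with all requirements imposed on bounded Lipschitz functions). -/
structure IsLipIso (𝕜 : Type*) {X Y E F : Type*} [RCLike 𝕜] [MetricSpace X] [MetricSpace Y]
    [NormedAddCommGroup E] [NormedSpace 𝕜 E] [NormedAddCommGroup F] [NormedSpace 𝕜 F]
    (T : (X → E) → (Y → F)) : Prop where
  mapsLip : ∀ f, IsBddLip f → IsBddLip (T f)
  map_add : ∀ f g, IsBddLip f → IsBddLip g → T (f + g) = T f + T g
  map_smul : ∀ (c : 𝕜) (f), IsBddLip f → T (c • f) = c • T f
  norm_map : ∀ f, IsBddLip f → lipNorm (T f) = lipNorm f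
  surjOn : ∀ g, IsBddLip g → ∃ f, IsBddLip f ∧ T f = g

/-- `Δ : Lip(X,E) → Lip(Y,F)` is a `2`-local isometry. -/
def Is2LocalLipIso (𝕜 : Type*) {X Y E F : Type*} [RCLike 𝕜] [MetricSpace X] [MetricSpace Y]
    [NormedAddCommGroup E] [NormedSpace 𝕜 E] [NormedAddCommGroup F] [NormedSpace 𝕜 F]
    (Δ : (X → E) → (Y → F)) : Prop :=
  ∀ f g : X → E, IsBddLip f → IsBddLip g →
    ∃ T : (X → E) → (Y → F), IsLipIso 𝕜 T ∧ Δ f = T f ∧ Δ g = T g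

/-- `φ` preserves distances less than `2`. -/
def PreservesDistLT2 {Y X : Type*} [MetricSpace Y] [MetricSpace X] (φ : Y → X) : Prop :=
  ∀ y y' : Y, dist y y' < 2 → dist (φ y) (φ y') = dist y y'

/-- Two points lie in the same `2`-component: they are joined by a finite chain of points with
consecutive distances less than `2`. -/
def SameTwoComponent {Y : Type*} [MetricSpace Y] : Y → Y → Prop :=
  Relation.ReflTransGen fun a b => dist a b < 2

/-- `T` is a standard isometry from `Lip(X,E)` to `Lip(Y,F)`: there are `φ ∈ Iso_{<2}(Y,X)` and
`J : Y → Iso(E,F)` constant on `2`-components with `T f y = J y (f (φ y))`. -/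
def IsStandardLipIso (𝕜 : Type*) {X Y E F : Type*} [RCLike 𝕜] [MetricSpace X] [MetricSpace Y]
    [NormedAddCommGroup E] [NormedSpace 𝕜 E] [NormedAddCommGroup F] [NormedSpace 𝕜 F]
    (T : (X → E) → (Y → F)) : Prop :=
  ∃ (φ : Y → X) (ψ : X → Y) (J : Y → E ≃ₗᵢ[𝕜] F),
    Function.LeftInverse ψ φ ∧ Function.RightInverse ψ φ ∧
    PreservesDistLT2 φ ∧ PreservesDistLT2 ψ ∧
    (∀ y y' : Y, SameTwoComponent y y' → J y = J y') ∧
    ∀ f, IsBddLip f → ∀ y : Y, T f y = J y (f (φ y))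

/-- `Δ : Lip(X,E) → Lip(Y,F)` is a `2`-local standard isometry. -/
def Is2LocalStdLipIso (𝕜 : Type*) {X Y E F : Type*} [RCLike 𝕜] [MetricSpace X] [MetricSpace Y]
    [NormedAddCommGroup E] [NormedSpace 𝕜 E] [NormedAddCommGroup F] [NormedSpace 𝕜 F]
    (Δ : (X → E) → (Y → F)) : Prop :=
  ∀ f g : X → E, IsBddLip f → IsBddLip g →
    ∃ T : (X → E) → (Y → F), IsStandardLipIso 𝕜 T ∧ Δ f = T f ∧ Δ g = T g

/-- A normed space is smooth: every norm-one vector has a unique norm-one supporting functional. -/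
def IsSmooth (𝕜 : Type*) (E : Type*) [RCLike 𝕜] [NormedAddCommGroup E] [NormedSpace 𝕜 E] :
    Prop :=
  ∀ e : E, ‖e‖ = 1 → ∃! u : StrongDual 𝕜 E, ‖u‖ = 1 ∧ u e = 1

/-- A normed space is reflexive: the canonical inclusion in the double dual is onto. -/
def IsReflexiveSp (𝕜 : Type*) (E : Type*) [RCLike 𝕜] [NormedAddCommGroup E] [NormedSpace 𝕜 E] :
    Prop :=
  Function.Surjective (NormedSpace.inclusionInDoubleDual 𝕜 E)

/-- `E` is `2`-iso-reflexive: every `2`-local isometry on `E` is linear and surjective. -/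
def TwoIsoReflexive (𝕜 : Type*) (E : Type*) [RCLike 𝕜] [NormedAddCommGroup E] [NormedSpace 𝕜 E] :
    Prop :=
  ∀ Δ : E → E, (∀ a b : E, ∃ T : E ≃ₗᵢ[𝕜] E, Δ a = T a ∧ Δ b = T b) →
    (∀ a b : E, Δ (a + b) = Δ a + Δ b) ∧ (∀ (c : 𝕜) (a : E), Δ (c • a) = c • Δ a) ∧
      Function.Surjective Δ

/-- The set `A_{x,u*,f} = {(y,v*) ∈ Y × B_{F*} : v*(Δ(f)(y)) = u*(f(x))}`. -/
def setA (𝕜 : Type*) {X Y E F : Type*} [RCLike 𝕜] [MetricSpace X] [MetricSpace Y]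
    [NormedAddCommGroup E] [NormedSpace 𝕜 E] [NormedAddCommGroup F] [NormedSpace 𝕜 F]
    (Δ : (X → E) → (Y → F)) (x : X) (u : StrongDual 𝕜 E) (f : X → E) :
    Set (Y × StrongDual 𝕜 F) :=
  {p | ‖p.2‖ ≤ 1 ∧ p.2 (Δ f p.1) = u (f x)}

/-- The set `A_{x,u*} = ⋂_{f ∈ Lip(X,E)} A_{x,u*,f}`. -/
def setAInter (𝕜 : Type*) {X Y E F : Type*} [RCLike 𝕜] [MetricSpace X] [MetricSpace Y]
    [NormedAddCommGroup E] [NormedSpace 𝕜 E] [NormedAddCommGroup F] [NormedSpace 𝕜 F]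
    (Δ : (X → E) → (Y → F)) (x : X) (u : StrongDual 𝕜 E) :
    Set (Y × StrongDual 𝕜 F) :=
  ⋂ f ∈ {f : X → E | IsBddLip f}, setA 𝕜 Δ x u f

open RCLike ComplexConjugate

section LipschitzNorm

variable {X E : Type*} [MetricSpace X] [NormedAddCommGroup E]

theorem IsBddLip.add {f g : X → E} (hf : IsBddLip f) (hg : IsBddLip g) : IsBddLip (f + g) := by
  obtain ⟨⟨K, hK⟩, C, hC⟩ := hf
  obtain ⟨⟨K', hK'⟩, C', hC'⟩ := hg
  refine ⟨⟨K + K', fun x y => ?_⟩, C + C', fun x =>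
    (norm_add_le _ _).trans (add_le_add (hC x) (hC' x))⟩
  calc ‖(f + g) x - (f + g) y‖ = ‖(f x - f y) + (g x - g y)‖ := by simp only [Pi.add_apply]; abel_nf
    _ ≤ K * dist x y + K' * dist x y := (norm_add_le _ _).trans (add_le_add (hK x y) (hK' x y))
    _ = (K + K') * dist x y := by ring

theorem IsBddLip.neg {f : X → E} (hf : IsBddLip f) : IsBddLip (-f) := by
  obtain ⟨⟨K, hK⟩, C, hC⟩ := hf
  refine ⟨⟨K, fun x y => ?_⟩, C, fun x => by simpa using hC x⟩
  rw [Pi.neg_apply, Pi.neg_apply, ← neg_sub', norm_neg]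
  exact hK x y

theorem IsBddLip.sub {f g : X → E} (hf : IsBddLip f) (hg : IsBddLip g) : IsBddLip (f - g) := by
  simpa [sub_eq_add_neg] using hf.add hg.neg

theorem isBddLip_const (z : E) : IsBddLip (fun _ : X => z) :=
  ⟨⟨0, fun x y => by simp⟩, ‖z‖, fun _ => le_rfl⟩

theorem IsBddLip.smul {𝕜 : Type*} [RCLike 𝕜] [NormedSpace 𝕜 E] (c : 𝕜) {f : X → E}
    (hf : IsBddLip f) : IsBddLip (c • f) := by
  obtain ⟨⟨K, hK⟩, C, hC⟩ := hf
  refine ⟨⟨‖c‖ * K, fun x y => ?_⟩, ‖c‖ * C, fun x => ?_⟩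
  · rw [Pi.smul_apply, Pi.smul_apply, ← smul_sub, norm_smul, mul_assoc]
    exact mul_le_mul_of_nonneg_left (hK x y) (norm_nonneg c)
  · rw [Pi.smul_apply, norm_smul]
    exact mul_le_mul_of_nonneg_left (hC x) (norm_nonneg c)

theorem IsBddLip.continuous {f : X → E} (hf : IsBddLip f) : Continuous f := by
  obtain ⟨⟨K, hK⟩, -⟩ := hf
  refine (LipschitzWith.of_dist_le_mul (K := (max K 0).toNNReal) fun x y => ?_).continuous
  rw [Real.coe_toNNReal _ (le_max_right _ _), dist_eq_norm]
  exact (hK x y).trans (mul_le_mul_of_nonneg_right (le_max_left _ _) dist_nonneg)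

theorem lipConst_nonneg (f : X → E) : 0 ≤ lipConst f :=
  Real.sInf_nonneg fun _ hK => hK.1

theorem lipConst_le {f : X → E} {K : ℝ} (hK : 0 ≤ K) (h : ∀ x y, ‖f x - f y‖ ≤ K * dist x y) :
    lipConst f ≤ K :=
  csInf_le ⟨0, fun _ hK => hK.1⟩ ⟨hK, h⟩

theorem norm_sub_le_lipConst {f : X → E} (hf : IsBddLip f) (x y : X) :
    ‖f x - f y‖ ≤ lipConst f * dist x y := by
  rcases eq_or_ne x y with rfl | hxy
  · simp
  have hd : 0 < dist x y := dist_pos.2 hxy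
  obtain ⟨⟨K, hK⟩, -⟩ := hf
  have hne : {K : ℝ | 0 ≤ K ∧ ∀ x y, ‖f x - f y‖ ≤ K * dist x y}.Nonempty :=
    ⟨max K 0, le_max_right _ _,
      fun x y => (hK x y).trans (mul_le_mul_of_nonneg_right (le_max_left _ _) dist_nonneg)⟩
  rw [← div_le_iff₀ hd]
  exact le_csInf hne fun K' hK' => (div_le_iff₀ hd).2 (hK'.2 x y)

theorem lipConst_le_lipNorm (f : X → E) : lipConst f ≤ lipNorm f := le_max_left _ _

theorem norm_le_lipNorm {f : X → E} (hf : IsBddLip f) (x : X) : ‖f x‖ ≤ lipNorm f := by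
  obtain ⟨-, C, hC⟩ := hf
  exact (le_ciSup ⟨C, by rintro - ⟨y, rfl⟩; exact hC y⟩ x).trans (le_max_right _ _)

theorem lipNorm_le [Nonempty X] {f : X → E} {A : ℝ} (hL : lipConst f ≤ A) (hS : ∀ x, ‖f x‖ ≤ A) :
    lipNorm f ≤ A :=
  max_le hL (ciSup_le hS)

theorem lipNorm_zero : lipNorm (0 : X → E) = 0 := by
  have hL : lipConst (0 : X → E) = 0 :=
    le_antisymm (lipConst_le le_rfl fun _ _ => by simp) (lipConst_nonneg _)
  simp [lipNorm, hL, Real.iSup_const_zero]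

theorem lipNorm_const_le [Nonempty X] (z : E) : lipNorm (fun _ : X => z) ≤ ‖z‖ :=
  lipNorm_le (lipConst_le (norm_nonneg z) fun _ _ => by simp; positivity) fun _ => le_rfl

theorem IsBddLip.eq_of_lipNorm_sub_eq_zero {f g : X → E} (hf : IsBddLip f) (hg : IsBddLip g)
    (h : lipNorm (f - g) = 0) : f = g := by
  funext x
  rw [← sub_eq_zero, ← norm_le_zero_iff, ← h]
  exact norm_le_lipNorm (hf.sub hg) x

end LipschitzNorm

section Tent

variable {𝕜 X E : Type*} [RCLike 𝕜] [MetricSpace X] [NormedAddCommGroup E] [NormedSpace 𝕜 E]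

variable (𝕜) in
noncomputable def tent (x₀ : X) (ρ : ℝ) (z : E) : X → E :=
  fun x => ((max (1 - dist x x₀ / ρ) 0 : ℝ) : 𝕜) • z

theorem tent_apply_self (x₀ : X) (ρ : ℝ) (z : E) : tent 𝕜 x₀ ρ z x₀ = z := by
  simp [tent]

theorem tent_apply_of_le {x₀ x : X} {ρ : ℝ} (hρ : 0 < ρ) (h : ρ ≤ dist x x₀) (z : E) :
    tent 𝕜 x₀ ρ z x = 0 := by
  have : 1 - dist x x₀ / ρ ≤ 0 := by rw [sub_nonpos, le_div_iff₀ hρ, one_mul]; exact h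
  simp [tent, max_eq_right this]

variable {ρ : ℝ} (x₀ : X) (z : E)

theorem norm_tent_apply_le (hρ : 0 ≤ ρ) (x : X) : ‖tent 𝕜 x₀ ρ z x‖ ≤ ‖z‖ := by
  rw [tent, norm_smul, norm_ofReal]
  refine mul_le_of_le_one_left (norm_nonneg z) (abs_le.2 ⟨?_, ?_⟩)
  · linarith [le_max_right (1 - dist x x₀ / ρ) 0]
  · exact max_le (by linarith [div_nonneg (dist_nonneg (x := x) (y := x₀)) hρ]) zero_le_one

theorem norm_tent_sub_le (hρ : 0 ≤ ρ) (x y : X) :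
    ‖tent 𝕜 x₀ ρ z x - tent 𝕜 x₀ ρ z y‖ ≤ ‖z‖ / ρ * dist x y := by
  rw [tent, tent, ← sub_smul, ← ofReal_sub, norm_smul, norm_ofReal]
  calc |max (1 - dist x x₀ / ρ) 0 - max (1 - dist y x₀ / ρ) 0| * ‖z‖
      ≤ |dist x x₀ - dist y x₀| / ρ * ‖z‖ := by
        gcongr
        refine (abs_max_sub_max_le_abs _ _ _).trans_eq ?_
        rw [sub_sub_sub_cancel_left, ← sub_div, abs_div, abs_of_nonneg hρ, abs_sub_comm]
    _ ≤ dist x y / ρ * ‖z‖ := by gcongr; exact abs_dist_sub_le x y x₀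
    _ = ‖z‖ / ρ * dist x y := by ring

theorem isBddLip_tent (hρ : 0 ≤ ρ) : IsBddLip (tent 𝕜 x₀ ρ z) :=
  ⟨⟨_, norm_tent_sub_le x₀ z hρ⟩, _, norm_tent_apply_le x₀ z hρ⟩

theorem lipNorm_tent_le (hρ : 0 ≤ ρ) : lipNorm (tent 𝕜 x₀ ρ z) ≤ max (‖z‖ / ρ) ‖z‖ :=
  have : Nonempty X := ⟨x₀⟩
  lipNorm_le ((lipConst_le (by positivity) (norm_tent_sub_le x₀ z hρ)).trans (le_max_left _ _))
    fun x => (norm_tent_apply_le x₀ z hρ x).trans (le_max_right _ _)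

end Tent

section Support

variable {𝕜 E : Type*} [RCLike 𝕜] [NormedAddCommGroup E] [NormedSpace 𝕜 E]

theorem StrongDual.norm_le_of_forall_mem_ball_lt [NormedSpace ℝ E] {g : StrongDual ℝ E} {r : ℝ}
    (h : ∀ x ∈ ball (0 : E) 1, g x < r) : ‖g‖ ≤ r := by
  have hr : 0 < r := by simpa using h 0 (mem_ball_self one_pos)
  refine ContinuousLinearMap.opNorm_le_of_unit_norm hr.le fun x hx => ?_
  by_contra! hlt
  -- rescaling `x` into the ball gives a point where `|g| = r`
  have hgx : 0 < ‖g x‖ := hr.trans hlt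
  have hax : (r / ‖g x‖) • x ∈ ball (0 : E) 1 := by
    rw [mem_ball_zero_iff, norm_smul, hx, mul_one, Real.norm_of_nonneg (by positivity)]
    exact (div_lt_one hgx).2 hlt
  have hax' : -((r / ‖g x‖) • x) ∈ ball (0 : E) 1 := by simpa using hax
  have habs : |g ((r / ‖g x‖) • x)| = r := by
    rw [map_smul, smul_eq_mul, abs_mul, abs_of_pos (by positivity), ← Real.norm_eq_abs,
      div_mul_cancel₀ _ hgx.ne']
  rcases abs_eq hr.le |>.1 habs with h' | h' <;>
    linarith [h _ hax, h _ hax', map_neg g ((r / ‖g x‖) • x)]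

theorem StrongDual.exists_re_eq_of_norm_le_one [NormedSpace ℝ E] [IsScalarTower ℝ 𝕜 E]
    {g : StrongDual ℝ E} (hg : ‖g‖ ≤ 1) {e : E} (he : ‖e‖ = 1) (hge : g e = 1) :
    ∃ u : StrongDual 𝕜 E, ‖u‖ = 1 ∧ u e = 1 ∧ ∀ x, re (u x) = g x := by
  set u : StrongDual 𝕜 E := StrongDual.extendRCLike g
  have hu : ‖u‖ ≤ 1 := by rwa [StrongDual.norm_extendRCLike]
  have hre : ∀ x, re (u x) = g x := StrongDual.re_extendRCLike_apply g
  have hue : u e = 1 := by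
    have h1 : re (u e) = 1 := by rw [hre, hge]
    have h2 : ‖u e‖ ≤ re (u e) := by
      rw [h1]; simpa [he] using (u.le_opNorm e).trans (by simpa [he] using hu)
    rw [← re_eq_self_of_le h2, h1, ofReal_one]
  refine ⟨u, le_antisymm hu ?_, hue, hre⟩
  simpa [hue, he] using u.le_opNorm e

theorem exists_dual_re_nonneg_of_one_le_norm_add_smul {e w : E} (he : ‖e‖ = 1) {t₀ : ℝ}
    (ht₀ : 0 < t₀) (h : ∀ t ∈ Icc 0 t₀, 1 ≤ ‖e + (t : 𝕜) • w‖) :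
    ∃ u : StrongDual 𝕜 E, ‖u‖ = 1 ∧ u e = 1 ∧ 0 ≤ re (u w) := by
  let _ : NormedSpace ℝ E := NormedSpace.restrictScalars ℝ 𝕜 E
  have _ : IsScalarTower ℝ 𝕜 E := RestrictScalars.isScalarTower ℝ 𝕜 E
  have hdisj : Disjoint (ball (0 : E) 1) (segment ℝ e (e + (t₀ : 𝕜) • w)) := by
    refine Set.disjoint_left.2 fun a ha hseg => ?_
    rw [segment_eq_image'] at hseg
    obtain ⟨θ, hθ, rfl⟩ := hseg
    simp only at ha
    have := h (θ * t₀) ⟨mul_nonneg hθ.1 ht₀.le, mul_le_of_le_one_left ht₀.le hθ.2⟩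
    rw [mem_ball_zero_iff, add_sub_cancel_left, real_smul_eq_coe_smul (K := 𝕜), smul_smul,
      ← ofReal_mul] at ha
    linarith
  obtain ⟨g, r, hball, hseg⟩ :=
    _root_.geometric_hahn_banach_open (convex_ball 0 1) isOpen_ball (convex_segment _ _) hdisj
  have hgr := StrongDual.norm_le_of_forall_mem_ball_lt hball
  have hr : 0 < r := by simpa using hball 0 (mem_ball_self one_pos)
  have hge : g e = r := by
    have h2 : g e ≤ ‖g‖ := by simpa [he] using (le_abs_self _).trans (g.le_opNorm e)
    linarith [hseg e (left_mem_segment _ _ _)]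
  have hgw : 0 ≤ g w := by
    have := hseg _ (right_mem_segment _ _ _)
    rw [map_add, ← real_smul_eq_coe_smul (K := 𝕜), map_smul, smul_eq_mul, hge] at this
    exact nonneg_of_mul_nonneg_right (by linarith) ht₀
  obtain ⟨u, hu, hue, hre⟩ := StrongDual.exists_re_eq_of_norm_le_one (𝕜 := 𝕜) (g := r⁻¹ • g)
    (by rw [norm_smul, norm_inv, Real.norm_of_nonneg hr.le]; exact inv_mul_le_one_of_le₀ hgr hr.le)
    he (by rw [smul_apply, hge, smul_eq_mul, inv_mul_cancel₀ hr.ne'])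
  refine ⟨u, hu, hue, ?_⟩
  rw [hre, smul_apply, smul_eq_mul]
  positivity

theorem IsSmooth.re_apply_nonneg_of_one_le_norm_add_smul (hsm : IsSmooth 𝕜 E) {e w : E}
    (he : ‖e‖ = 1) {u : StrongDual 𝕜 E} (hu : ‖u‖ = 1) (hue : u e = 1) {t₀ : ℝ} (ht₀ : 0 < t₀)
    (h : ∀ t ∈ Icc 0 t₀, 1 ≤ ‖e + (t : 𝕜) • w‖) : 0 ≤ re (u w) := by
  obtain ⟨u', hu', hu'e, hu'w⟩ := exists_dual_re_nonneg_of_one_le_norm_add_smul he ht₀ h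
  obtain ⟨_, _, huniq⟩ := hsm e he
  rwa [huniq u ⟨hu, hue⟩, ← huniq u' ⟨hu', hu'e⟩]

theorem IsReflexiveSp.exists_apply_eq_one (hrefl : IsReflexiveSp 𝕜 E) {u : StrongDual 𝕜 E}
    (hu : ‖u‖ = 1) : ∃ e : E, ‖e‖ = 1 ∧ u e = 1 := by
  obtain ⟨G, hG, hGu⟩ := exists_dual_vector 𝕜 u (by rw [hu]; exact one_ne_zero)
  obtain ⟨e, rfl⟩ := hrefl G
  refine ⟨e, ?_, ?_⟩
  · rw [← hG]; exact ((NormedSpace.inclusionInDoubleDualLi 𝕜).norm_map e).symm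
  · simpa [hu] using hGu

end Support

section SmoothPoint

variable {𝕜 X E : Type*} [RCLike 𝕜] [MetricSpace X] [NormedAddCommGroup E] [NormedSpace 𝕜 E]

variable (𝕜) in
structure IsLipContractiveFunctional (W : (X → E) → 𝕜) : Prop where
  map_add : ∀ f g, IsBddLip f → IsBddLip g → W (f + g) = W f + W g
  map_smul : ∀ (c : 𝕜) (f), IsBddLip f → W (c • f) = c * W f
  norm_le : ∀ f, IsBddLip f → ‖W f‖ ≤ lipNorm f

theorem lipConst_tent_add_smul_le {x₀ : X} {e : E} (he : ‖e‖ = 1) {g : X → E}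
    (hg : IsBddLip g) {t : ℝ} (ht : 0 ≤ t) :
    lipConst (tent 𝕜 x₀ 2 e + (t : 𝕜) • g) ≤ 1 / 2 + t * lipNorm g := by
  have hN : 0 ≤ lipNorm g := (norm_nonneg _).trans (norm_le_lipNorm hg x₀)
  refine lipConst_le (by positivity) fun x y => ?_
  have hP := norm_tent_sub_le (𝕜 := 𝕜) x₀ e zero_le_two x y
  rw [he] at hP
  calc ‖(tent 𝕜 x₀ 2 e + (t : 𝕜) • g) x - (tent 𝕜 x₀ 2 e + (t : 𝕜) • g) y‖
      = ‖(tent 𝕜 x₀ 2 e x - tent 𝕜 x₀ 2 e y) + (t : 𝕜) • (g x - g y)‖ := by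
        simp only [Pi.add_apply, Pi.smul_apply, smul_sub]; abel_nf
    _ ≤ 1 / 2 * dist x y + t * (lipNorm g * dist x y) := by
        refine norm_add_le_of_le hP ?_
        rw [norm_smul, norm_ofReal, abs_of_nonneg ht]
        gcongr
        exact (norm_sub_le_lipConst hg x y).trans (by gcongr; exact lipConst_le_lipNorm g)
    _ = (1 / 2 + t * lipNorm g) * dist x y := by ring

/-- Split `P x + t g x = φ (e + t g x₀) + t (g x - φ g x₀)`, `φ` the profile of the tent `P`,
and bound the remainder by `3 (lipNorm g) (1 - φ)`. -/
theorem norm_tent_add_smul_apply_le {x₀ : X} {e : E} {g : X → E} (hg : IsBddLip g) {t : ℝ}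
    (ht : 0 ≤ t) (htA : 3 * t * lipNorm g ≤ ‖e + (t : 𝕜) • g x₀‖) (x : X) :
    ‖(tent 𝕜 x₀ 2 e + (t : 𝕜) • g) x‖ ≤ ‖e + (t : 𝕜) • g x₀‖ := by
  set N := lipNorm g
  set A := ‖e + (t : 𝕜) • g x₀‖
  set φ := max (1 - dist x x₀ / 2) 0
  have hφ0 : 0 ≤ φ := le_max_right _ _
  have hφ1 : φ ≤ 1 :=
    max_le (by linarith [div_nonneg (dist_nonneg (x := x) (y := x₀)) zero_le_two]) zero_le_one
  have hrem : ‖g x - (φ : 𝕜) • g x₀‖ ≤ 3 * N * (1 - φ) := by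
    rcases le_total (dist x x₀) 2 with hd | hd
    · have hφ : φ = 1 - dist x x₀ / 2 := max_eq_left (by linarith)
      have : g x - (φ : 𝕜) • g x₀ = (g x - g x₀) + ((dist x x₀ / 2 : ℝ) : 𝕜) • g x₀ := by
        rw [hφ, ofReal_sub, ofReal_one, sub_smul, one_smul]; abel
      have hL := (norm_sub_le_lipConst hg x x₀).trans
        (mul_le_mul_of_nonneg_right (lipConst_le_lipNorm g) dist_nonneg)
      rw [this, hφ]
      refine (norm_add_le_of_le hL le_rfl).trans ?_
      rw [norm_smul, norm_ofReal, abs_of_nonneg (by positivity)]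
      nlinarith [norm_le_lipNorm hg x₀, dist_nonneg (x := x) (y := x₀)]
    · have hφ : φ = 0 := max_eq_right (by linarith)
      rw [hφ, ofReal_zero, zero_smul, sub_zero, sub_zero]
      nlinarith [norm_le_lipNorm hg x, (norm_nonneg _).trans (norm_le_lipNorm hg x)]
  calc ‖(tent 𝕜 x₀ 2 e + (t : 𝕜) • g) x‖
      = ‖(φ : 𝕜) • (e + (t : 𝕜) • g x₀) + (t : 𝕜) • (g x - (φ : 𝕜) • g x₀)‖ := by
        simp only [Pi.add_apply, Pi.smul_apply, tent, smul_add, smul_sub, smul_smul, mul_comm, φ]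
        abel_nf
    _ ≤ φ * A + t * (3 * N * (1 - φ)) := by
        refine norm_add_le_of_le ?_ ?_
        · rw [norm_smul, norm_ofReal, abs_of_nonneg hφ0]
        · rw [norm_smul, norm_ofReal, abs_of_nonneg ht]; gcongr
    _ ≤ A := by nlinarith

theorem lipNorm_tent_add_smul_le {x₀ : X} {e : E} (he : ‖e‖ = 1) {g : X → E} (hg : IsBddLip g)
    {t : ℝ} (ht : 0 ≤ t) (htg : 4 * t * lipNorm g ≤ 1) :
    lipNorm (tent 𝕜 x₀ 2 e + (t : 𝕜) • g) ≤ ‖e + (t : 𝕜) • g x₀‖ := by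
  have : Nonempty X := ⟨x₀⟩
  have hA : 1 - t * lipNorm g ≤ ‖e + (t : 𝕜) • g x₀‖ := by
    have := norm_sub_le (e + (t : 𝕜) • g x₀) ((t : 𝕜) • g x₀)
    rw [add_sub_cancel_right, he, norm_smul, norm_ofReal, abs_of_nonneg ht] at this
    nlinarith [norm_le_lipNorm hg x₀]
  exact lipNorm_le ((lipConst_tent_add_smul_le he hg ht).trans (by linarith))
    (norm_tent_add_smul_apply_le hg ht (by linarith))

theorem IsSmooth.eq_eval_of_apply_tent_eq_one (hsm : IsSmooth 𝕜 E) {W : (X → E) → 𝕜}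
    (hW : IsLipContractiveFunctional 𝕜 W) {x₀ : X} {e : E} (he : ‖e‖ = 1) {u : StrongDual 𝕜 E}
    (hu : ‖u‖ = 1) (hue : u e = 1) (hWP : W (tent 𝕜 x₀ 2 e) = 1) {h : X → E} (hh : IsBddLip h) :
    W h = u (h x₀) := by
  set P := tent 𝕜 x₀ 2 e
  have hP : IsBddLip P := isBddLip_tent x₀ e zero_le_two
  have hker : ∀ g, IsBddLip g → W g = 0 → 0 ≤ re (u (g x₀)) := by
    intro g hg hWg
    have hN : 0 ≤ lipNorm g := (norm_nonneg _).trans (norm_le_lipNorm hg x₀)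
    refine hsm.re_apply_nonneg_of_one_le_norm_add_smul he hu hue
      (t₀ := 1 / (4 * lipNorm g + 1)) (by positivity) fun t ht => ?_
    have htg : 4 * t * lipNorm g ≤ 1 := by
      have := ht.2
      rw [le_div_iff₀ (by positivity)] at this
      nlinarith [ht.1]
    have hWt : W (P + (t : 𝕜) • g) = 1 := by
      rw [hW.map_add _ _ hP (hg.smul _), hW.map_smul _ _ hg, hWP, hWg, mul_zero, add_zero]
    calc (1 : ℝ) = ‖W (P + (t : 𝕜) • g)‖ := by rw [hWt, norm_one]
      _ ≤ lipNorm (P + (t : 𝕜) • g) := hW.norm_le _ (hP.add (hg.smul _))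
      _ ≤ ‖e + (t : 𝕜) • g x₀‖ := lipNorm_tent_add_smul_le he hg ht.1 htg
  -- rotating `g` by `-conj (u (g x₀))` turns `0 ≤ re (u (g x₀))` into `u (g x₀) = 0`
  have hker' : ∀ g, IsBddLip g → W g = 0 → u (g x₀) = 0 := by
    intro g hg hWg
    have := hker (-(conj (u (g x₀))) • g) (hg.smul _) (by rw [hW.map_smul _ _ hg, hWg, mul_zero])
    rw [Pi.smul_apply, map_smul, smul_eq_mul, neg_mul, RCLike.conj_mul, map_neg, ← ofReal_pow,
      ofReal_re, neg_nonneg] at this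
    exact norm_eq_zero.1 (pow_eq_zero_iff two_ne_zero |>.1 (le_antisymm this (by positivity)))
  have hWg : W (h + (-W h) • P) = 0 := by
    rw [hW.map_add _ _ hh (hP.smul _), hW.map_smul _ _ hP, hWP]; ring
  have := hker' _ (hh.add (hP.smul _)) hWg
  have hPx : P x₀ = e := tent_apply_self x₀ 2 e
  rw [Pi.add_apply, Pi.smul_apply, hPx, map_add, map_smul, hue, smul_eq_mul, mul_one] at this
  linear_combination -this

theorem IsLipContractiveFunctional.exists_norm_apply_eq_one [CompactSpace X] [Nonempty X]
    {W : (X → E) → 𝕜} (hW : IsLipContractiveFunctional 𝕜 W) {p : X → E} (hp : IsBddLip p)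
    (hpn : lipNorm p ≤ 1) (hWp : W p = 1) {z : E} (hz : W (fun _ => z) ≠ 0) :
    ∃ x, ‖p x‖ = 1 := by
  obtain ⟨xs, -, hxs⟩ := isCompact_univ.exists_isMaxOn univ_nonempty
    (continuous_norm.comp hp.continuous).continuousOn
  refine ⟨xs, le_antisymm ((norm_le_lipNorm hp xs).trans hpn) ?_⟩
  by_contra! hlt
  -- otherwise `p` has room for a small constant that increases `‖W p‖` beyond `lipNorm p`
  set c := W (fun _ => z)
  have hc : 0 < ‖c‖ := norm_pos_iff.2 hz
  set t := (1 - ‖p xs‖) / (‖c‖ * ‖z‖ + 1)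
  have ht : 0 < t := div_pos (by linarith) (by positivity)
  have htz : t * (‖c‖ * ‖z‖) ≤ 1 - ‖p xs‖ := by
    rw [div_mul_eq_mul_div, div_le_iff₀ (by positivity)]
    nlinarith [mul_nonneg hc.le (norm_nonneg z)]
  set s : 𝕜 := (t : 𝕜) * conj c
  have hs : ‖s‖ = t * ‖c‖ := by rw [norm_mul, norm_conj, norm_ofReal, abs_of_pos ht]
  have hconst := (isBddLip_const (X := X) z).smul s
  have hWp' : W (p + s • fun _ => z) = ((1 + t * ‖c‖ ^ 2 : ℝ) : 𝕜) := by
    rw [hW.map_add _ _ hp hconst, hW.map_smul _ _ (isBddLip_const z), hWp, mul_assoc,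
      RCLike.conj_mul]
    push_cast; ring
  have hlip : lipNorm (p + s • fun _ => z) ≤ 1 := by
    refine lipNorm_le (lipConst_le zero_le_one fun x y => ?_) fun x => ?_
    · simpa using (norm_sub_le_lipConst hp x y).trans
        (mul_le_mul_of_nonneg_right ((lipConst_le_lipNorm p).trans hpn) dist_nonneg)
    · calc ‖p x + s • z‖ ≤ ‖p xs‖ + t * (‖c‖ * ‖z‖) := by
            refine norm_add_le_of_le (isMaxOn_iff.1 hxs x (mem_univ x)) ?_
            rw [norm_smul, hs, mul_assoc]
        _ ≤ 1 := by linarith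
  have := (hW.norm_le _ (hp.add hconst)).trans hlip
  rw [hWp', norm_ofReal, abs_of_pos (by positivity)] at this
  nlinarith [pow_pos hc 2]

end SmoothPoint

section Localization

variable {𝕜 X Y E F : Type*} [RCLike 𝕜] [MetricSpace X] [MetricSpace Y]
  [NormedAddCommGroup E] [NormedSpace 𝕜 E] [NormedAddCommGroup F] [NormedSpace 𝕜 F]

theorem exists_isBddLip_apply_ne_zero {b : StrongDual 𝕜 E} (hb : b ≠ 0) {x₀ x' x'' : X}
    (h' : x' ≠ x₀) (h'' : x'' ≠ x₀) :
    ∃ f : X → E, IsBddLip f ∧ b (f x₀) ≠ 0 ∧ f x' = 0 ∧ f x'' = 0 := by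
  obtain ⟨z, hz⟩ : ∃ z, b z ≠ 0 := by
    by_contra! H
    exact hb (ContinuousLinearMap.ext H)
  have hρ : 0 < min (dist x' x₀) (dist x'' x₀) := lt_min (dist_pos.2 h') (dist_pos.2 h'')
  exact ⟨tent 𝕜 x₀ _ z, isBddLip_tent x₀ z hρ.le, by rwa [tent_apply_self],
    tent_apply_of_le hρ (min_le_left _ _) z, tent_apply_of_le hρ (min_le_right _ _) z⟩

theorem eq_of_forall_apply_add_apply_eq {a₁ a₂ a : StrongDual 𝕜 E} (ha₁ : a₁ ≠ 0)
    (ha₂ : a₂ ≠ 0) {x₁ x₂ x : X}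
    (h : ∀ f : X → E, IsBddLip f → a₁ (f x₁) + a₂ (f x₂) = a (f x)) : x₁ = x₂ := by
  by_contra hne
  by_cases hx : x₁ = x
  · subst hx
    obtain ⟨f, hf, hfx, hf₁, -⟩ := exists_isBddLip_apply_ne_zero ha₂ hne hne
    have := h f hf
    simp only [hf₁, map_zero, zero_add] at this
    exact hfx this
  · obtain ⟨f, hf, hfx, hf₂, hfx'⟩ :=
      exists_isBddLip_apply_ne_zero ha₁ (Ne.symm hne) (Ne.symm hx)
    have := h f hf
    simp only [hf₂, hfx', map_zero, add_zero] at this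
    exact hfx this

namespace IsLipIso

variable {T : (X → E) → (Y → F)}

theorem map_sub (hT : IsLipIso 𝕜 T) {f g : X → E} (hf : IsBddLip f) (hg : IsBddLip g) :
    T (f - g) = T f - T g := by
  have := hT.map_add f ((-1 : 𝕜) • g) hf (hg.smul _)
  rwa [hT.map_smul _ _ hg, neg_one_smul, neg_one_smul, ← sub_eq_add_neg, ← sub_eq_add_neg]
    at this

theorem injOn (hT : IsLipIso 𝕜 T) {f g : X → E} (hf : IsBddLip f) (hg : IsBddLip g)
    (h : T f = T g) : f = g :=
  hf.eq_of_lipNorm_sub_eq_zero hg <| by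
    rw [← hT.norm_map _ (hf.sub hg), hT.map_sub hf hg, h, sub_self, lipNorm_zero]

theorem exists_inverse (hT : IsLipIso 𝕜 T) :
    ∃ S : (Y → F) → (X → E), IsLipIso 𝕜 S ∧ (∀ f, IsBddLip f → S (T f) = f) ∧
      ∀ g, IsBddLip g → T (S g) = g := by
  choose! S hS hTS using hT.surjOn
  have hST : ∀ f, IsBddLip f → S (T f) = f := fun f hf =>
    hT.injOn (hS _ (hT.mapsLip f hf)) hf (hTS _ (hT.mapsLip f hf))
  refine ⟨S, ⟨hS, fun f g hf hg => ?_, fun c f hf => ?_, fun f hf => ?_,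
    fun f hf => ⟨T f, hT.mapsLip f hf, hST f hf⟩⟩, hST, hTS⟩
  · refine hT.injOn (hS _ (hf.add hg)) ((hS f hf).add (hS g hg)) ?_
    rw [hTS _ (hf.add hg), hT.map_add _ _ (hS f hf) (hS g hg), hTS f hf, hTS g hg]
  · refine hT.injOn (hS _ (hf.smul c)) ((hS f hf).smul c) ?_
    rw [hTS _ (hf.smul c), hT.map_smul _ _ (hS f hf), hTS f hf]
  · rw [← hT.norm_map _ (hS f hf), hTS f hf]

theorem isLipContractiveFunctional_comp (hT : IsLipIso 𝕜 T) {w : StrongDual 𝕜 F}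
    (hw : ‖w‖ ≤ 1) (y : Y) : IsLipContractiveFunctional 𝕜 fun f => w (T f y) where
  map_add f g hf hg := by simp [hT.map_add f g hf hg]
  map_smul c f hf := by simp [hT.map_smul c f hf]
  norm_le f hf := calc
    ‖w (T f y)‖ ≤ ‖w‖ * ‖T f y‖ := w.le_opNorm _
    _ ≤ 1 * lipNorm (T f) :=
      mul_le_mul hw (norm_le_lipNorm (hT.mapsLip f hf) y) (norm_nonneg _) zero_le_one
    _ = lipNorm f := by rw [one_mul, hT.norm_map f hf]

theorem norm_apply_sub_apply_le (hT : IsLipIso 𝕜 T) {w : StrongDual 𝕜 F} (hw : ‖w‖ ≤ 1)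
    {f : X → E} (hf : IsBddLip f) (y y' : Y) :
    ‖w (T f y) - w (T f y')‖ ≤ lipNorm f * dist y y' := calc
  ‖w (T f y) - w (T f y')‖ ≤ ‖w‖ * ‖T f y - T f y'‖ := by rw [← w.map_sub]; exact w.le_opNorm _
  _ ≤ 1 * (lipConst (T f) * dist y y') :=
    mul_le_mul hw (norm_sub_le_lipConst (hT.mapsLip f hf) y y') (norm_nonneg _) zero_le_one
  _ ≤ lipNorm f * dist y y' := by
    rw [one_mul, ← hT.norm_map f hf]; gcongr; exact lipConst_le_lipNorm _

/-- The preimage `p` of the tent peaking at `y₀` attains its norm at some `x`; the functional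
`g ↦ a (T⁻¹ g x)`, `a` supporting `p x`, then peaks at that tent, so it is `w ∘ δ_{y₀}`. -/
theorem exists_eval_eq [CompactSpace X] [Nonempty X] (hsm : IsSmooth 𝕜 F)
    (hrefl : IsReflexiveSp 𝕜 F) (hT : IsLipIso 𝕜 T) {w : StrongDual 𝕜 F} (hw : ‖w‖ = 1)
    {y₀ : Y} {z : E} (hz : w (T (fun _ => z) y₀) ≠ 0) :
    ∃ (x : X) (a : StrongDual 𝕜 E) (e : E), ‖e‖ = 1 ∧ a e = 1 ∧
      ∀ h, IsBddLip h → w (T h y₀) = a (h x) := by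
  obtain ⟨S, hS, hST, hTS⟩ := hT.exists_inverse
  obtain ⟨e', he', hwe'⟩ := hrefl.exists_apply_eq_one hw
  have hk : IsBddLip (tent 𝕜 y₀ 2 e') := isBddLip_tent y₀ e' zero_le_two
  have hp := hS.mapsLip _ hk
  have hpn : lipNorm (S (tent 𝕜 y₀ 2 e')) ≤ 1 := by
    rw [hS.norm_map _ hk]
    refine (lipNorm_tent_le y₀ e' zero_le_two).trans ?_
    rw [he']
    norm_num
  obtain ⟨x, hx⟩ := (hT.isLipContractiveFunctional_comp hw.le y₀).exists_norm_apply_eq_one hp hpn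
    (by simp only [hTS _ hk, tent_apply_self, hwe']) hz
  obtain ⟨a, ha, hap⟩ := exists_dual_vector 𝕜 _ (by rw [hx]; exact one_ne_zero)
  have hap' : a (S (tent 𝕜 y₀ 2 e') x) = 1 := by rw [hap, hx, ofReal_one]
  refine ⟨x, a, _, hx, hap', fun h hh => ?_⟩
  rw [← hST h hh, hTS _ (hT.mapsLip h hh)]
  exact (hsm.eq_eval_of_apply_tent_eq_one (hS.isLipContractiveFunctional_comp ha.le x) he' hw
    hwe' hap' (hT.mapsLip h hh)).symm

theorem eq_of_eval_eq [CompactSpace X] [Nonempty X] (hsm : IsSmooth 𝕜 F)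
    (hrefl : IsReflexiveSp 𝕜 F) (hT : IsLipIso 𝕜 T) {y₀ : Y} {w₁ w₂ : StrongDual 𝕜 F}
    {a₁ a₂ : StrongDual 𝕜 E} {x₁ x₂ : X} (ha₁ : a₁ ≠ 0) (ha₂ : a₂ ≠ 0)
    (h₁ : ∀ h, IsBddLip h → w₁ (T h y₀) = a₁ (h x₁))
    (h₂ : ∀ h, IsBddLip h → w₂ (T h y₀) = a₂ (h x₂)) : x₁ = x₂ := by
  obtain ⟨l, hl, hsum⟩ : ∃ l : 𝕜, l ≠ 0 ∧ a₁ + l • a₂ ≠ 0 := by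
    by_cases h : a₁ + (1 : 𝕜) • a₂ = 0
    · refine ⟨-1, by norm_num, fun h' => ha₁ ?_⟩
      linear_combination (norm := module) (2⁻¹ : 𝕜) • h + (2⁻¹ : 𝕜) • h'
    · exact ⟨1, one_ne_zero, h⟩
  obtain ⟨z, hz⟩ : ∃ z, (a₁ + l • a₂) z ≠ 0 := by
    by_contra! H
    exact hsum (ContinuousLinearMap.ext H)
  -- `w₁ + l w₂` does not vanish on constants, so it localizes at a single point as well
  set w := w₁ + l • w₂
  have hw : ∀ h, IsBddLip h → w (T h y₀) = a₁ (h x₁) + (l • a₂) (h x₂) := fun h hh => by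
    simp [w, h₁ h hh, h₂ h hh]
  have hwz : w (T (fun _ => z) y₀) ≠ 0 := by rw [hw _ (isBddLip_const z)]; simpa using hz
  have hw0 : ‖w‖ ≠ 0 := by
    rintro h0
    rw [norm_eq_zero.1 h0] at hwz
    exact hwz rfl
  obtain ⟨x, a, -, -, -, ha⟩ := hT.exists_eval_eq hsm hrefl (w := (‖w‖⁻¹ : 𝕜) • w)
    (by rw [norm_smul, norm_inv, norm_ofReal, abs_norm, inv_mul_cancel₀ hw0]) (z := z)
    (by simpa [hw0] using hwz)
  refine eq_of_forall_apply_add_apply_eq ha₁ (smul_ne_zero hl ha₂) (a := (‖w‖ : 𝕜) • a) (x := x)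
    fun h hh => ?_
  rw [← hw h hh, smul_apply, ← ha h hh, smul_apply, smul_smul, ← ofReal_inv, ← ofReal_mul,
    mul_inv_cancel₀ hw0, ofReal_one, one_smul]

theorem min_dist_le_dist (hT : IsLipIso 𝕜 T) {v : StrongDual 𝕜 F} (hv : ‖v‖ ≤ 1)
    {a b : StrongDual 𝕜 E} {e : E} (he : ‖e‖ = 1) (hbe : b e = 1) {x₁ x₂ : X} {y₁ y₂ : Y}
    (h₁ : ∀ h, IsBddLip h → v (T h y₁) = b (h x₁))
    (h₂ : ∀ h, IsBddLip h → v (T h y₂) = a (h x₂)) : min (dist x₁ x₂) 1 ≤ dist y₁ y₂ := by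
  rcases eq_or_ne x₁ x₂ with rfl | hne
  · simp
  set ρ := min (dist x₁ x₂) 1
  have hρ : 0 < ρ := lt_min (dist_pos.2 hne) one_pos
  set f := tent 𝕜 x₁ ρ ((ρ : 𝕜) • e)
  have hf : IsBddLip f := isBddLip_tent _ _ hρ.le
  have hfn : lipNorm f ≤ 1 := by
    refine (lipNorm_tent_le _ _ hρ.le).trans ?_
    rw [norm_smul, norm_ofReal, abs_of_pos hρ, he, mul_one, div_self hρ.ne']
    exact max_le le_rfl (min_le_right _ _)
  have hf₂ : f x₂ = 0 := tent_apply_of_le hρ (by rw [dist_comm]; exact min_le_left _ _) _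
  have hf₁ : f x₁ = (ρ : 𝕜) • e := tent_apply_self _ _ _
  have := hT.norm_apply_sub_apply_le hv hf y₁ y₂
  rw [h₁ f hf, h₂ f hf, hf₁, hf₂, map_zero, sub_zero, _root_.map_smul, hbe, smul_eq_mul,
    mul_one, norm_ofReal, abs_of_pos hρ] at this
  exact this.trans (mul_le_of_le_one_left dist_nonneg hfn)

theorem apply_const_ne_zero (hT : IsLipIso 𝕜 T) {v : StrongDual 𝕜 F} (hv : ‖v‖ ≤ 1)
    {u : StrongDual 𝕜 E} {e : E} (he : ‖e‖ = 1) (hue : u e = 1) {x₂ : X} {y₁ y₂ : Y}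
    (h₂ : ∀ h, IsBddLip h → v (T h y₂) = u (h x₂)) (hd : dist y₁ y₂ < 1) :
    v (T (fun _ => e) y₁) ≠ 0 := by
  have : Nonempty X := ⟨x₂⟩
  intro h0
  have := (hT.norm_apply_sub_apply_le hv (isBddLip_const e) y₁ y₂).trans
    (mul_le_mul_of_nonneg_right ((lipNorm_const_le e).trans he.le) dist_nonneg)
  rw [h0, h₂ _ (isBddLip_const e), hue, zero_sub, norm_neg, norm_one, one_mul] at this
  linarith

end IsLipIso

end Localization

theorem stmt18_general {𝕜 X Y E : Type*} [RCLike 𝕜]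
    [MetricSpace X] [CompactSpace X]
    [MetricSpace Y]
    [NormedAddCommGroup E] [NormedSpace 𝕜 E]
    (hsm : IsSmooth 𝕜 E) (hrefl : IsReflexiveSp 𝕜 E)
    (Δ : (X → E) → (Y → E)) (hΔ : Is2LocalLipIso 𝕜 Δ)
    (y₁ y₂ : Y) (x₁ x₂ : X)
    (u₁ u₂ v₁ v₂ : StrongDual 𝕜 E)
    (hu₁ : ‖u₁‖ = 1) (hu₂ : ‖u₂‖ = 1) (hv₁ : ‖v₁‖ = 1) (hv₂ : ‖v₂‖ = 1)
    (h₁ : ∀ f : X → E, IsBddLip f → v₁ (Δ f y₁) = u₁ (f x₁))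
    (h₂ : ∀ f : X → E, IsBddLip f → v₂ (Δ f y₂) = u₂ (f x₂)) :
    dist x₁ x₂ ≤ max 1 (Metric.diam (Set.univ : Set X)) * dist y₁ y₂ := by
  have : Nonempty X := ⟨x₁⟩
  rcases le_or_gt 1 (dist y₁ y₂) with hd | hd
  · calc dist x₁ x₂ ≤ max 1 (diam univ) :=
          (dist_le_diam_of_mem isCompact_univ.isBounded (mem_univ _) (mem_univ _)).trans
            (le_max_right _ _)
      _ ≤ _ := le_mul_of_one_le_right (zero_le_one.trans (le_max_left _ _)) hd
  obtain ⟨e₁, he₁, hue₁⟩ := hrefl.exists_apply_eq_one hu₁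
  obtain ⟨e₂, he₂, hue₂⟩ := hrefl.exists_apply_eq_one hu₂
  have hP₁ := isBddLip_tent (𝕜 := 𝕜) x₁ e₁ zero_le_two
  have hP₂ := isBddLip_tent (𝕜 := 𝕜) x₂ e₂ zero_le_two
  obtain ⟨T, hT, hT₁, hT₂⟩ := hΔ _ _ hP₁ hP₂
  have hA : ∀ h, IsBddLip h → v₁ (T h y₁) = u₁ (h x₁) := fun h =>
    hsm.eq_eval_of_apply_tent_eq_one (hT.isLipContractiveFunctional_comp hv₁.le y₁) he₁ hu₁ hue₁
      (by simp only [← hT₁, h₁ _ hP₁, tent_apply_self, hue₁])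
  have hB : ∀ h, IsBddLip h → v₂ (T h y₂) = u₂ (h x₂) := fun h =>
    hsm.eq_eval_of_apply_tent_eq_one (hT.isLipContractiveFunctional_comp hv₂.le y₂) he₂ hu₂ hue₂
      (by simp only [← hT₂, h₂ _ hP₂, tent_apply_self, hue₂])
  obtain ⟨x, b, e, he, hbe, hb⟩ :=
    hT.exists_eval_eq hsm hrefl hv₂ (hT.apply_const_ne_zero hv₂.le he₂ hue₂ hB hd)
  obtain rfl : x₁ = x := hT.eq_of_eval_eq hsm hrefl (by rintro rfl; simp at hu₁)
    (by rintro rfl; simp at hbe) hA hb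
  have hdist := (min_le_iff.1 (hT.min_dist_le_dist hv₂.le he hbe hb hB)).resolve_right hd.not_ge
  exact hdist.trans (le_mul_of_one_le_left dist_nonneg (le_max_left _ _))

/-- The map `ψ` is Lipschitz: `d(x₁,x₂) ≤ max{1, diam X}·d(y₁,y₂)` for supported pairs. -/
theorem stmt18 {𝕜 X Y E : Type*} [RCLike 𝕜]
    [MetricSpace X] [CompactSpace X] [PathConnectedSpace X]
    [MetricSpace Y] [CompactSpace Y] [PathConnectedSpace Y]
    [NormedAddCommGroup E] [NormedSpace 𝕜 E] [CompleteSpace E]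
    (hsm : IsSmooth 𝕜 E) (hrefl : IsReflexiveSp 𝕜 E) (h2ir : TwoIsoReflexive 𝕜 E)
    (Δ : (X → E) → (Y → E)) (hΔ : Is2LocalLipIso 𝕜 Δ)
    (y₁ y₂ : Y) (x₁ x₂ : X)
    (u₁ u₂ v₁ v₂ : StrongDual 𝕜 E)
    (hu₁ : ‖u₁‖ = 1) (hu₂ : ‖u₂‖ = 1) (hv₁ : ‖v₁‖ = 1) (hv₂ : ‖v₂‖ = 1)
    (h₁ : ∀ f : X → E, IsBddLip f → v₁ (Δ f y₁) = u₁ (f x₁))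
    (h₂ : ∀ f : X → E, IsBddLip f → v₂ (Δ f y₂) = u₂ (f x₂)) :
    dist x₁ x₂ ≤ max 1 (Metric.diam (Set.univ : Set X)) * dist y₁ y₂ :=
  stmt18_general hsm hrefl Δ hΔ y₁ y₂ x₁ x₂ u₁ u₂ v₁ v₂ hu₁ hu₂ hv₁ hv₂ h₁ h₂
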